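/- arXiv:0904.2659 — 3 statements merged into one kernel-verified Lean document; each statement's English description precedes it below -/
import Mathlib

section
/- Let α be an infinite cardinal and let G be a precompact topological group. Then G is α-pseudocompact if and only if G is G_α-dense in its compact completion (which then coincides with the Čech–Stone compactification βG of G). -/
/-!
If `G` is `α`-pseudocompact and `y` lies in a `G_α`-set `⋂ 𝒰` of `K`, functions `K → [0, 1]`
vanishing at `y` and equal to `1` off each `U ∈ 𝒰` combine into `H : K → ℝ^α`. The image of `G`
under `H` is compact, hence closed, and dense in `H(K)`; so `H g = H y` for some `g ∈ G`, and
then `g ∈ ⋂ 𝒰`.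

Conversely, in a compact group the closure of every open set is a `G_δ`-set. Hence, if `G` is
`G_δ`-dense in `K`, it meets `⋂ closure Oᵢ` for countably many open `Oᵢ` as soon as this
intersection is nonempty. This forces every continuous `h : G → ℝ` to be bounded and to have a
single cluster value at each point of `K`, so `h` extends continuously to `K`. A continuous
`f : G → ℝ^α` therefore extends to `F : K → ℝ^α`; the fibres of `F` are `G_α`-sets, so
`G_α`-density gives `f(G) = F(K)`, which is compact.
-/

open Cardinal Set Function Topology Pointwise

universe u

/-- A `G_α`-set: an intersection of at most `α` many open sets. -/
def IsGAlphaSet {X : Type u} [TopologicalSpace X] (α : Cardinal.{u}) (S : Set X) : Prop :=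
  ∃ 𝒰 : Set (Set X), (∀ U ∈ 𝒰, IsOpen U) ∧ #𝒰 ≤ α ∧ S = ⋂₀ 𝒰

/-- A subset is `G_α`-dense if it meets every nonempty `G_α`-set. -/
def IsGAlphaDense {X : Type u} [TopologicalSpace X] (α : Cardinal.{u}) (D : Set X) : Prop :=
  ∀ S : Set X, IsGAlphaSet α S → S.Nonempty → (D ∩ S).Nonempty

/-- `α`-pseudocompact: every continuous map to `ℝ^α` has compact range. -/
def IsAlphaPseudocompact (α : Cardinal.{u}) (X : Type u) [TopologicalSpace X] : Prop :=
  ∀ f : X → (α.out → ℝ), Continuous f → IsCompact (Set.range f)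

/-- The topological weight: least cardinality of a basis. -/
noncomputable def tweight (X : Type u) [TopologicalSpace X] : Cardinal.{u} :=
  sInf {c : Cardinal.{u} | ∃ B : Set (Set X), TopologicalSpace.IsTopologicalBasis B ∧ #B = c}

/-- The pseudocharacter: sup over points of the least cardinality of a family of
neighborhoods intersecting in that point. -/
noncomputable def pseudochar (X : Type u) [TopologicalSpace X] : Cardinal.{u} :=
  ⨆ x : X, sInf {c : Cardinal.{u} |
    ∃ 𝒰 : Set (Set X), (∀ U ∈ 𝒰, U ∈ nhds x) ∧ ⋂₀ 𝒰 = {x} ∧ #𝒰 = c}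

/-- `s_α`-extremal: no proper dense `α`-pseudocompact subgroup. -/
def IsSAlphaExtremal (α : Cardinal.{u}) (G : Type u) [AddCommGroup G] [TopologicalSpace G] :
    Prop :=
  ¬ ∃ D : AddSubgroup G, D ≠ ⊤ ∧ Dense (D : Set G) ∧ IsAlphaPseudocompact α D

/-- `r_α`-extremal: no strictly finer `α`-pseudocompact group topology. -/
def IsRAlphaExtremal (α : Cardinal.{u}) (G : Type u) [AddCommGroup G] [t : TopologicalSpace G] :
    Prop :=
  ¬ ∃ t' : TopologicalSpace G, t' < t ∧ @IsTopologicalAddGroup G t' _ ∧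
    @IsAlphaPseudocompact α G t'

/-- A divisible abelian group. -/
def IsDivisibleGroup (A : Type u) [AddCommGroup A] : Prop :=
  ∀ a : A, ∀ n : ℕ, 0 < n → ∃ b : A, n • b = a

/-- The free rank `r₀` of an abelian group. -/
noncomputable def freeRank (A : Type u) [AddCommGroup A] : Cardinal.{u} :=
  Module.rank ℤ A

/-- `d_α`-extremal: all quotients by dense `α`-pseudocompact subgroups are divisible. -/
def IsDAlphaExtremal (α : Cardinal.{u}) (G : Type u) [AddCommGroup G] [TopologicalSpace G] :
    Prop :=
  ∀ D : AddSubgroup G, Dense (D : Set G) → IsAlphaPseudocompact α D →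
    IsDivisibleGroup (G ⧸ D)

/-- `c_α`-extremal: all quotients by dense `α`-pseudocompact subgroups have free rank `< 2^α`. -/
def IsCAlphaExtremal (α : Cardinal.{u}) (G : Type u) [AddCommGroup G] [TopologicalSpace G] :
    Prop :=
  ∀ D : AddSubgroup G, Dense (D : Set G) → IsAlphaPseudocompact α D →
    freeRank (G ⧸ D) < 2 ^ α

/-- `α`-extremal: both `d_α`- and `c_α`-extremal. -/
def IsAlphaExtremal (α : Cardinal.{u}) (G : Type u) [AddCommGroup G] [TopologicalSpace G] :
    Prop :=
  IsDAlphaExtremal α G ∧ IsCAlphaExtremal α G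

/-- The homomorphism `x ↦ m • x` of an abelian group. -/
def nsmulHom (m : ℕ) (G : Type u) [AddCommGroup G] : G →+ G :=
  AddMonoidHom.mk' (fun x => m • x) (fun a b => smul_add m a b)

/-- `α`-singular: `w(mG) ≤ α` for some positive integer `m`. -/
def IsAlphaSingular (α : Cardinal.{u}) (G : Type u) [AddCommGroup G] [TopologicalSpace G] :
    Prop :=
  ∃ m : ℕ, 0 < m ∧ tweight ((nsmulHom m G).range) ≤ α

/-- `Λ_α(G)`: the closed subgroups of the abelian group `G` which are `G_α`-sets. -/
def LambdaAlphaAdd (α : Cardinal.{u}) (G : Type u) [AddCommGroup G] [TopologicalSpace G] :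
    Set (AddSubgroup G) :=
  {N | IsClosed (N : Set G) ∧ IsGAlphaSet α (N : Set G)}

/-- The `P_α`-topology: the topology generated by the `G_α`-sets. -/
def PAlphaTop (α : Cardinal.{u}) (X : Type u) (t : TopologicalSpace X) : TopologicalSpace X :=
  TopologicalSpace.generateFrom {S : Set X | @IsGAlphaSet X t α S}

/-- The Bohr topology on an abelian group: the initial topology of all homomorphisms
to the circle group `𝕋 = ℝ/ℤ`. -/
noncomputable def bohrTopology (G : Type u) [AddCommGroup G] : TopologicalSpace G :=
  ⨅ h : G →+ AddCircle (1 : ℝ), TopologicalSpace.induced h inferInstance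

open MeasureTheory Filter

section GAlpha

variable {X : Type u} [TopologicalSpace X] {α : Cardinal.{u}}

theorem isGAlphaSet_iInter {ι : Type u} {T : ι → Set X} (hT : ∀ i, IsOpen (T i)) (hι : #ι ≤ α) :
    IsGAlphaSet α (⋂ i, T i) :=
  ⟨range T, forall_mem_range.2 hT, mk_range_le.trans hι, (sInter_range T).symm⟩

theorem isGAlphaSet_preimage_singleton (hα : ℵ₀ ≤ α) {ι : Type u} (hι : #ι ≤ α)
    {F : X → ι → ℝ} (hF : Continuous F) (p : ι → ℝ) : IsGAlphaSet α (F ⁻¹' {p}) := by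
  have hfiber : F ⁻¹' {p} = ⋂ q : ι × ℕ, {x | dist (F x q.1) (p q.1) < 1 / (q.2 + 1)} := by
    ext x
    simp only [mem_preimage, mem_singleton_iff, mem_iInter, mem_ofPred_eq, Prod.forall]
    refine ⟨fun h i n => by rw [h, dist_self]; positivity,
      fun h => funext fun i => eq_of_forall_dist_le fun ε hε => ?_⟩
    obtain ⟨n, hn⟩ := exists_nat_one_div_lt hε
    exact (h i n).le.trans hn.le
  rw [hfiber]
  refine isGAlphaSet_iInter (fun q => isOpen_lt
    (((continuous_apply q.1).comp hF).dist continuous_const) continuous_const) ?_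
  rw [mk_prod, lift_uzero, mk_nat, lift_aleph0]
  exact (mul_le_mul' hι hα).trans (mul_eq_self hα).le

end GAlpha

def IsGδDense {X : Type*} [TopologicalSpace X] (D : Set X) : Prop :=
  ∀ S : Set X, IsGδ S → S.Nonempty → (D ∩ S).Nonempty

theorem IsGAlphaDense.isGδDense {X : Type u} [TopologicalSpace X] {α : Cardinal.{u}} {D : Set X}
    (hD : IsGAlphaDense α D) (hα : ℵ₀ ≤ α) : IsGδDense D := by
  rintro S ⟨𝒰, h𝒰, h𝒰c, rfl⟩ hS
  exact hD _ ⟨𝒰, h𝒰, (mk_le_aleph0_iff.2 h𝒰c.to_subtype).trans hα, rfl⟩ hS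

section Pseudocompact

variable {X K : Type u} [TopologicalSpace X] [TopologicalSpace K] {α : Cardinal.{u}}
  {e : X → K}

theorem IsAlphaPseudocompact.range_comp_eq (hX : IsAlphaPseudocompact α X) (he : Continuous e)
    (hd : DenseRange e) {H : K → α.out → ℝ} (hH : Continuous H) : range (H ∘ e) = range H := by
  refine (range_comp_subset_range e H).antisymm ?_
  calc range H = H '' closure (range e) := by rw [hd.closure_range, image_univ]
    _ ⊆ closure (H '' range e) := image_closure_subset_closure_image hH
    _ = range (H ∘ e) := by rw [← range_comp, (hX _ (hH.comp he)).isClosed.closure_eq]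

theorem IsAlphaPseudocompact.isGAlphaDense_range [CompletelyRegularSpace K]
    (hX : IsAlphaPseudocompact α X) (he : Continuous e) (hd : DenseRange e) :
    IsGAlphaDense α (range e) := by
  rintro _ ⟨𝒰, h𝒰, h𝒰α, rfl⟩ ⟨y, hy⟩
  rcases isEmpty_or_nonempty 𝒰 with h𝒰e | h𝒰ne
  · have : Nonempty K := ⟨y⟩
    obtain ⟨x⟩ := hd.nonempty
    exact ⟨e x, mem_range_self x, by simp [isEmpty_coe_sort.1 h𝒰e]⟩
  obtain ⟨j⟩ : Nonempty (𝒰 ↪ α.out) := by rwa [← Cardinal.le_def, mk_out]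
  choose f hf hfy hfU using fun U : 𝒰 => CompletelyRegularSpace.completely_regular y
    (U : Set K)ᶜ (h𝒰 U U.2).isClosed_compl (not_not.2 (mem_sInter.1 hy U U.2))
  let H (k : K) (i : α.out) : ℝ := f (Function.invFun j i) k
  obtain ⟨x, hx⟩ : H y ∈ range (H ∘ e) :=
    hX.range_comp_eq he hd (continuous_pi fun i => continuous_subtype_val.comp (hf _)) ▸
      mem_range_self y
  refine ⟨e x, mem_range_self x, mem_sInter.2 fun U hU => not_not.1 fun hxU => ?_⟩
  have := congrFun hx (j ⟨U, hU⟩)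
  simp [H, Function.leftInverse_invFun j.injective _, hfy, hfU ⟨U, hU⟩ hxU] at this

end Pseudocompact

theorem Antitone.exists_forall_le_of_iInf_mem {α : Type*} [CompleteLattice α] {f : α → ENNReal}
    (hf : Antitone f) {p : α → Prop} (hp : ∀ a : ℕ → α, (∀ n, p (a n)) → p (⨅ n, a n))
    {a₀ : α} (ha₀ : p a₀) : ∃ a, p a ∧ ∀ b, p b → f b ≤ f a := by
  obtain ⟨u, -, hu, huS⟩ := exists_seq_tendsto_sSup (S := f '' {a | p a}) ⟨f a₀, a₀, ha₀, rfl⟩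
    (OrderTop.bddAbove _)
  choose a hpa hfa using huS
  refine ⟨⨅ n, a n, hp a hpa, fun b hb => ?_⟩
  calc f b ≤ sSup (f '' {a | p a}) := le_sSup ⟨b, hb, rfl⟩
    _ ≤ f (⨅ n, a n) := le_of_tendsto' hu fun n => hfa n ▸ hf (iInf_le a n)

namespace Submonoid

variable {K : Type*} [Group K] {N M : Submonoid K} {U : Set K}

def mulCore (N : Submonoid K) (U : Set K) : Set K := {y | ∀ n ∈ N, y * n ∈ U}

theorem mulCore_subset : N.mulCore U ⊆ U := fun y hy => by simpa using hy 1 N.one_mem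

theorem mul_mem_mulCore {y n : K} (hy : y ∈ N.mulCore U) (hn : n ∈ N) : y * n ∈ N.mulCore U :=
  fun m hm => mul_assoc y n m ▸ hy _ (N.mul_mem hn hm)

theorem mulCore_antitone (h : N ≤ M) : M.mulCore U ⊆ N.mulCore U := fun _ hy n hn => hy n (h hn)

variable [TopologicalSpace K]

/-- These submonoids replace the closed normal subgroups `N` with `K ⧸ N` metrizable used in the
classical argument for compact groups. -/
def IsCountableNhdsInter (N : Submonoid K) : Prop :=
  ∃ 𝒱 : Set (Set K), 𝒱.Countable ∧ (∀ V ∈ 𝒱, V ∈ 𝓝 (1 : K) ∧ IsClosed V) ∧ (N : Set K) = ⋂₀ 𝒱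

theorem IsCountableNhdsInter.isClosed (hN : N.IsCountableNhdsInter) : IsClosed (N : Set K) := by
  obtain ⟨𝒱, -, h𝒱, hN⟩ := hN
  exact hN ▸ isClosed_sInter fun V hV => (h𝒱 V hV).2

theorem IsCountableNhdsInter.inf (hN : N.IsCountableNhdsInter) (hM : M.IsCountableNhdsInter) :
    (N ⊓ M).IsCountableNhdsInter := by
  obtain ⟨𝒱, h𝒱c, h𝒱, hN⟩ := hN
  obtain ⟨𝒲, h𝒲c, h𝒲, hM⟩ := hM
  refine ⟨𝒱 ∪ 𝒲, h𝒱c.union h𝒲c, fun V hV => hV.elim (h𝒱 V) (h𝒲 V), ?_⟩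
  rw [coe_inf, hN, hM, sInter_union]

theorem IsCountableNhdsInter.iInf {ι : Type*} [Countable ι] {N : ι → Submonoid K}
    (hN : ∀ i, (N i).IsCountableNhdsInter) : (⨅ i, N i).IsCountableNhdsInter := by
  choose 𝒱 h𝒱c h𝒱 hN𝒱 using hN
  refine ⟨⋃ i, 𝒱 i, countable_iUnion h𝒱c, fun V hV => ?_, ?_⟩
  · obtain ⟨i, hi⟩ := mem_iUnion.1 hV
    exact h𝒱 i V hi
  · rw [coe_iInf, sInter_iUnion]
    exact iInter_congr hN𝒱

variable [IsTopologicalGroup K]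

theorem exists_isCountableNhdsInter_subset {O : Set K} (hO : O ∈ 𝓝 (1 : K)) :
    ∃ N : Submonoid K, N.IsCountableNhdsInter ∧ (N : Set K) ⊆ O := by
  have step (W : {W : Set K // W ∈ 𝓝 (1 : K)}) :
      ∃ V : {V : Set K // V ∈ 𝓝 (1 : K)}, IsClosed V.1 ∧ V.1 * V.1 ⊆ W.1 := by
    obtain ⟨V, hV, hVc, -, hVW⟩ := exists_closed_nhds_one_inv_eq_mul_subset W.2
    exact ⟨⟨V, hV⟩, hVc, hVW⟩
  choose next hclosed hmul using step
  let V (n : ℕ) : {V : Set K // V ∈ 𝓝 (1 : K)} := next (next^[n] ⟨O, hO⟩)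
  have hVsucc (n : ℕ) : V (n + 1) = next (V n) :=
    congrArg next (Function.iterate_succ_apply' ..)
  let N : Submonoid K :=
    { carrier := ⋂ n, (V n).1
      one_mem' := mem_iInter.2 fun n => mem_of_mem_nhds (V n).2
      mul_mem' := fun {x y} hx hy => mem_iInter.2 fun n => by
        have hx' := mem_iInter.1 hx (n + 1)
        have hy' := mem_iInter.1 hy (n + 1)
        rw [hVsucc] at hx' hy'
        exact hmul (V n) (Set.mul_mem_mul hx' hy') }
  refine ⟨N, ⟨range fun n => (V n).1, countable_range _, ?_, (sInter_range _).symm⟩, ?_⟩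
  · rintro _ ⟨n, rfl⟩
    exact ⟨(V n).2, hclosed _⟩
  · intro x hx
    simpa using hmul ⟨O, hO⟩ (Set.mul_mem_mul (mem_iInter.1 hx 0) (mem_of_mem_nhds (V 0).2))

theorem isOpen_mulCore (hN : IsCompact (N : Set K)) (hU : IsOpen U) : IsOpen (N.mulCore U) := by
  have hcore : N.mulCore U = (Uᶜ * (N : Set K)⁻¹)ᶜ := by
    ext y
    constructor
    · rintro hy ⟨u, hu, m, hm, rfl⟩
      exact hu (by simpa using hy m⁻¹ hm)
    · intro hy n hn
      by_contra hyn
      exact hy ⟨y * n, hyn, n⁻¹, by simpa using hn, by simp⟩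
  rw [hcore]
  exact (hU.isClosed_compl.mul_right_of_isCompact hN.inv).isOpen_compl

theorem exists_mem_mulCore (hU : IsOpen U) {z : K} (hz : z ∈ U) :
    ∃ N : Submonoid K, N.IsCountableNhdsInter ∧ z ∈ N.mulCore U := by
  have : (z * ·) ⁻¹' U ∈ 𝓝 (1 : K) :=
    (continuous_const_mul z).continuousAt.preimage_mem_nhds (by simpa using hU.mem_nhds hz)
  obtain ⟨N, hN, hNU⟩ := exists_isCountableNhdsInter_subset this
  exact ⟨N, hN, fun n hn => hNU hn⟩

end Submonoid

section CompactGroup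

variable {K : Type*} [Group K] [TopologicalSpace K] [IsTopologicalGroup K] [CompactSpace K]
  [T2Space K] {U : Set K}

/-- Choose `N` maximising the Haar measure of `N.mulCore U`. Any point of `U` outside the closure
of `N.mulCore U` would, after shrinking `N`, enlarge this core by a nonempty open set, so
`closure U = closure (N.mulCore U)`, which is right `N`-invariant. -/
theorem exists_isCountableNhdsInter_closure_mul_subset (hU : IsOpen U) :
    ∃ N : Submonoid K, N.IsCountableNhdsInter ∧ closure U * N ⊆ closure U := by
  let _ : MeasurableSpace K := borel K
  have _ : BorelSpace K := ⟨rfl⟩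
  let μ : Measure K := Measure.haar
  obtain ⟨N, hN, hNmax⟩ := Antitone.exists_forall_le_of_iInf_mem (f := fun N => μ (N.mulCore U))
    (fun _ _ h => measure_mono (Submonoid.mulCore_antitone h))
    (fun _ => Submonoid.IsCountableNhdsInter.iInf) (a₀ := ⊤)
    ⟨∅, countable_empty, by simp, by simp⟩
  have hUcore : U ⊆ closure (N.mulCore U) := by
    intro z hzU
    by_contra hz
    obtain ⟨M, hM, hzM⟩ := Submonoid.exists_mem_mulCore hU hzU
    set W := M.mulCore U \ closure (N.mulCore U)
    have hWopen : IsOpen W := (M.isOpen_mulCore hM.isClosed.isCompact hU).sdiff isClosed_closure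
    have hsub : N.mulCore U ∪ W ⊆ (N ⊓ M).mulCore U :=
      union_subset (Submonoid.mulCore_antitone inf_le_left)
        (sdiff_subset.trans (Submonoid.mulCore_antitone inf_le_right))
    have hdisj : Disjoint (N.mulCore U) W :=
      Set.disjoint_left.2 fun y hy hyW => hyW.2 (subset_closure hy)
    have hlt : μ (N.mulCore U) < μ ((N ⊓ M).mulCore U) :=
      calc μ (N.mulCore U) < μ (N.mulCore U) + μ W :=
            ENNReal.lt_add_right (measure_ne_top μ _) (hWopen.measure_pos μ ⟨z, hzM, hz⟩).ne'
        _ = μ (N.mulCore U ∪ W) := (measure_union hdisj hWopen.measurableSet).symm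
        _ ≤ μ ((N ⊓ M).mulCore U) := measure_mono hsub
    exact hlt.not_ge (hNmax _ (hN.inf hM))
  refine ⟨N, hN, ?_⟩
  rintro _ ⟨x, hx, n, hn, rfl⟩
  have hcl : closure U = closure (N.mulCore U) :=
    (closure_mono Submonoid.mulCore_subset).antisymm' (closure_minimal hUcore isClosed_closure)
  rw [hcl] at hx ⊢
  exact map_mem_closure (f := (· * n)) (continuous_mul_const n) hx
    fun y hy => Submonoid.mul_mem_mulCore hy hn

theorem IsOpen.isGδ_closure (hU : IsOpen U) : IsGδ (closure U) := by
  obtain ⟨N, ⟨𝒱, h𝒱c, h𝒱, hN⟩, hNU⟩ := exists_isCountableNhdsInter_closure_mul_subset hU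
  have : Countable 𝒱 := h𝒱c.to_subtype
  let P (s : Finset 𝒱) : Set K := ⋂ V ∈ s, (V : Set K)
  have hP (s : Finset 𝒱) : P s ∈ 𝓝 (1 : K) := (biInter_finset_mem s).2 fun V _ => (h𝒱 V V.2).1
  have hPc (s : Finset 𝒱) : IsClosed (P s) :=
    isClosed_iInter fun V => isClosed_iInter fun _ => (h𝒱 V V.2).2
  have hPanti : Antitone P := fun s t hst => iInter₂_mono' fun V hV => ⟨V, hst hV, subset_rfl⟩
  suffices closure U = ⋂ s, U * P s by
    rw [this]
    exact .iInter_of_isOpen fun s => hU.mul_right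
  refine subset_antisymm (subset_iInter fun s => ?_) fun y hy => ?_
  · have hsymm : P s ∩ (P s)⁻¹ ∈ 𝓝 (1 : K) := inter_mem (hP s) (inv_mem_nhds_one K (hP s))
    exact (closure_subset_mul_right_of_mem_nhds_one_of_inv U hsymm
      fun x hx => ⟨hx.2, by simpa using hx.1⟩).trans (mul_subset_mul_left inter_subset_left)
  -- by compactness, `y = (y * w⁻¹) * w` with `y * w⁻¹ ∈ closure U` and `w ∈ N`
  let D (s : Finset 𝒱) : Set K := P s ∩ {w | y * w⁻¹ ∈ closure U}
  have hD (s : Finset 𝒱) : IsClosed (D s) :=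
    (hPc s).inter (isClosed_closure.preimage (continuous_const.mul continuous_inv))
  obtain ⟨w, hw⟩ := IsCompact.nonempty_iInter_of_directed_nonempty_isCompact_isClosed D
    (show Antitone D from fun s t hst => inter_subset_inter_left _ (hPanti hst)).directed_ge
    (fun s => by
      obtain ⟨u, hu, v, hv, rfl⟩ := mem_iInter.1 hy s
      exact ⟨v, hv, by simpa using subset_closure hu⟩)
    (fun s => (hD s).isCompact) hD
  have hwN : w ∈ (N : Set K) :=
    hN ▸ mem_sInter.2 fun V hV =>
      mem_iInter₂.1 (mem_iInter.1 hw {⟨V, hV⟩}).1 ⟨V, hV⟩ (Finset.mem_singleton_self _)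
  simpa using hNU (mul_mem_mul (mem_iInter.1 hw ∅).2 hwN)

end CompactGroup

namespace IsGδDense

variable {X K : Type*} [TopologicalSpace X] [Group K] [TopologicalSpace K] [IsTopologicalGroup K]
  [CompactSpace K] [T2Space K] {e : X → K}

theorem exists_forall_mem_closure (hD : IsGδDense (range e)) (he : IsInducing e)
    (hd : DenseRange e) {𝒱 : Set (Set X)} (h𝒱c : 𝒱.Countable) (h𝒱 : ∀ V ∈ 𝒱, IsOpen V)
    {x : K} (hx : ∀ V ∈ 𝒱, x ∈ closure (e '' V)) : ∃ g, ∀ V ∈ 𝒱, g ∈ closure V := by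
  choose O hO heO using fun V hV => he.isOpen_iff.1 (h𝒱 V hV)
  have hcl (V : Set X) (hV : V ∈ 𝒱) : closure (e '' V) = closure (O V hV) := by
    have := (closure_mono inter_subset_left).antisymm
      (closure_minimal (hd.open_subset_closure_inter (hO V hV)) isClosed_closure)
    rwa [← image_preimage_eq_inter_range, heO V hV] at this
  obtain ⟨_, ⟨g, rfl⟩, hg⟩ := hD _ (IsGδ.biInter h𝒱c fun V hV => (hO V hV).isGδ_closure)
    ⟨x, mem_iInter₂.2 fun V hV => hcl V hV ▸ hx V hV⟩
  refine ⟨g, fun V hV => ?_⟩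
  rw [he.closure_eq_preimage_closure_image, mem_preimage, hcl V hV]
  exact mem_iInter₂.1 hg V hV

theorem exists_forall_abs_le (hD : IsGδDense (range e)) (he : IsInducing e) (hd : DenseRange e)
    {h : X → ℝ} (hh : Continuous h) : ∃ B, ∀ g, |h g| ≤ B := by
  by_contra! hB
  let V (n : ℕ) : Set X := {g | n < |h g|}
  have hVanti (n : ℕ) : V (n + 1) ⊆ V n := fun g (hg : ((n + 1 : ℕ) : ℝ) < |h g|) =>
    show (n : ℝ) < |h g| by push_cast at hg; linarith
  obtain ⟨x, hx⟩ := IsCompact.nonempty_iInter_of_sequence_nonempty_isCompact_isClosed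
    (fun n => closure (e '' V n)) (fun n => closure_mono (image_mono (hVanti n)))
    (fun n => (hB n).elim fun g hg => ⟨e g, subset_closure ⟨g, hg, rfl⟩⟩)
    isClosed_closure.isCompact fun _ => isClosed_closure
  obtain ⟨g, hg⟩ := hD.exists_forall_mem_closure he hd (countable_range V)
    (forall_mem_range.2 fun n => isOpen_lt continuous_const hh.abs)
    (forall_mem_range.2 (mem_iInter.1 hx))
  obtain ⟨n, hn⟩ := exists_nat_gt |h g|
  exact (closure_lt_subset_le continuous_const hh.abs (hg _ ⟨n, rfl⟩)).not_gt hn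

theorem exists_tendsto_comap_nhds (hD : IsGδDense (range e)) (he : IsInducing e)
    (hd : DenseRange e) {h : X → ℝ} (hh : Continuous h) (x : K) :
    ∃ L, Tendsto h (comap e (𝓝 x)) (𝓝 L) := by
  obtain ⟨B, hB⟩ := hD.exists_forall_abs_le he hd hh
  have hmem : ∀ᶠ g in comap e (𝓝 x), h g ∈ Icc (-B) B :=
    Eventually.of_forall fun g => abs_le.1 (hB g)
  have := (IsDenseInducing.mk he hd).comap_nhds_neBot x
  obtain ⟨a, -, ha⟩ := isCompact_Icc.exists_mapClusterPt (le_principal_iff.2 (mem_map.2 hmem))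
  refine ⟨a, isCompact_Icc.tendsto_nhds_of_unique_mapClusterPt hmem fun b _ hb => ?_⟩
  by_contra hba
  have hr : 0 < dist b a / 3 := by have := dist_pos.2 hba; positivity
  have hcl (c : ℝ) (hc : MapClusterPt c (comap e (𝓝 x)) h) :
      x ∈ closure (e '' (h ⁻¹' Metric.ball c (dist b a / 3))) :=
    mem_closure_iff_frequently.2 <|
      (frequently_comap.1 (mapClusterPt_iff_frequently.1 hc _ (Metric.ball_mem_nhds c hr))).mono
        fun _ ⟨g, hgy, hg⟩ => ⟨g, hg, hgy⟩
  obtain ⟨g, hg⟩ := hD.exists_forall_mem_closure he hd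
    (𝒱 := {h ⁻¹' Metric.ball a (dist b a / 3), h ⁻¹' Metric.ball b (dist b a / 3)})
    (toFinite _).countable (by rintro V (rfl | rfl) <;> exact Metric.isOpen_ball.preimage hh)
    (by rintro V (rfl | rfl); exacts [hcl a ha, hcl b hb])
  have hclose (c : ℝ) (hc : g ∈ closure (h ⁻¹' Metric.ball c (dist b a / 3))) :
      dist (h g) c ≤ dist b a / 3 :=
    Metric.closure_ball_subset_closedBall (map_mem_closure hh hc (mapsTo_preimage _ _))
  have := dist_triangle_left b a (h g)
  linarith [hclose a (hg _ (by simp)), hclose b (hg _ (by simp))]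

theorem exists_continuous_comp_eq (hD : IsGδDense (range e)) (he : IsInducing e)
    (hd : DenseRange e) {ι : Type*} {f : X → ι → ℝ} (hf : Continuous f) :
    ∃ F : K → ι → ℝ, Continuous F ∧ F ∘ e = f := by
  have di : IsDenseInducing e := ⟨he, hd⟩
  refine ⟨di.extend f, di.continuous_extend fun x => ?_, funext (di.extend_eq hf)⟩
  choose L hL using fun i => hD.exists_tendsto_comap_nhds he hd ((continuous_apply i).comp hf) x
  exact ⟨L, tendsto_pi_nhds.2 hL⟩

end IsGδDense

theorem IsGAlphaDense.isAlphaPseudocompact {X K : Type u} [TopologicalSpace X] [Group K]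
    [TopologicalSpace K] [IsTopologicalGroup K] [CompactSpace K] [T2Space K] {α : Cardinal.{u}}
    {e : X → K} (hD : IsGAlphaDense α (range e)) (hα : ℵ₀ ≤ α) (he : IsInducing e)
    (hd : DenseRange e) : IsAlphaPseudocompact α X := by
  intro f hf
  obtain ⟨F, hF, rfl⟩ := (hD.isGδDense hα).exists_continuous_comp_eq he hd hf
  suffices range (F ∘ e) = range F from this ▸ isCompact_range hF
  refine (range_comp_subset_range e F).antisymm ?_
  rintro _ ⟨x, rfl⟩
  obtain ⟨_, ⟨g, rfl⟩, hg⟩ :=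
    hD _ (isGAlphaSet_preimage_singleton hα (mk_out α).le hF (F x)) ⟨x, rfl⟩
  exact ⟨g, hg⟩

theorem statement_3_general (α : Cardinal.{u}) (hα : ℵ₀ ≤ α) (G K : Type u) [Group G]
    [TopologicalSpace G]
    [Group K] [TopologicalSpace K] [IsTopologicalGroup K] [T2Space K] [CompactSpace K]
    (e : G →* K) (he : IsEmbedding e) (hd : DenseRange e) :
    IsAlphaPseudocompact α G ↔ IsGAlphaDense α (Set.range e) :=
  ⟨fun hG => hG.isGAlphaDense_range he.continuous hd,
    fun hD => hD.isAlphaPseudocompact hα he.isInducing hd⟩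

/-- A precompact group `G` (given here with its compact completion `K`,
i.e. a compact group in which `G` embeds densely) is `α`-pseudocompact iff `G` is
`G_α`-dense in `K`. -/
theorem statement_3 (α : Cardinal.{u}) (hα : ℵ₀ ≤ α) (G K : Type u) [Group G]
    [TopologicalSpace G] [IsTopologicalGroup G] [T2Space G]
    [Group K] [TopologicalSpace K] [IsTopologicalGroup K] [T2Space K] [CompactSpace K]
    (e : G →* K) (he : IsEmbedding e) (hd : DenseRange e) :
    IsAlphaPseudocompact α G ↔ IsGAlphaDense α (Set.range e) :=
  statement_3_general α hα G K e he hd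
end

section
/- Let α be an infinite cardinal and let (G, τ) be a compact topological group (not necessarily abelian) of weight ≤ α. Then (G, τ) is both s_α-extremal and r_α-extremal. -/
open Cardinal Set Function Topology Pointwise

universe u

/-!
Weight `≤ α` and Urysohn's lemma give a continuous injection `f : G → ℝ^α`.
A dense `α`-pseudocompact subgroup `D` has compact, hence closed, image `f(D)`, which therefore
contains `f(closure D) = f(G)`; by injectivity `D = G`.
If `t'` is a finer `α`-pseudocompact group topology and `g` is `t'`-continuous, then `(g, f)` has
compact image in `ℝ × ℝ^α ≅ ℝ^α`, on which the projection to the second factor is a homeomorphism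
onto `f(G)`; so `g` factors continuously through `f`. As `t'` is completely regular, `f` is then an
embedding for `t'` as well, and `t' = t`.
-/

open TopologicalSpace

lemma exists_isTopologicalBasis_mk_le_of_tweight_le {X : Type u} [TopologicalSpace X]
    {α : Cardinal.{u}} (hw : tweight X ≤ α) : ∃ B : Set (Set X), IsTopologicalBasis B ∧ #B ≤ α := by
  obtain ⟨B, hB, hBw⟩ := csInf_mem (s := {c : Cardinal.{u} | ∃ B : Set (Set X),
    IsTopologicalBasis B ∧ #B = c}) ⟨_, _, isTopologicalBasis_opens, rfl⟩
  exact ⟨B, hB, hBw.trans_le hw⟩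

lemma exists_continuous_injective_pi_of_mk_le {ι κ : Type u} (h : #ι ≤ #κ) :
    ∃ e : (ι → ℝ) → (κ → ℝ), Continuous e ∧ Injective e := by
  obtain ⟨j⟩ := h
  cases isEmpty_or_nonempty ι
  · exact ⟨fun _ => 0, continuous_const, fun _ _ _ => Subsingleton.elim _ _⟩
  · exact ⟨fun v => v ∘ invFun j, by fun_prop, (invFun_surjective j.injective).injective_comp_right⟩

lemma exists_continuous_injective_pi_of_tweight_le {X : Type u} [TopologicalSpace X] [T4Space X]
    {α : Cardinal.{u}} (hα : ℵ₀ ≤ α) (hw : tweight X ≤ α) :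
    ∃ f : X → (α.out → ℝ), Continuous f ∧ Injective f := by
  obtain ⟨B, hB, hBα⟩ := exists_isTopologicalBasis_mk_le_of_tweight_le hw
  let ι := {p : B × B // Disjoint (closure (p.1 : Set X)) (closure (p.2 : Set X))}
  have hι : #ι ≤ #α.out := by
    calc #ι ≤ #(B × B) := mk_subtype_le _
      _ = #B * #B := by rw [mk_prod, lift_id]
      _ ≤ α * α := mul_le_mul' hBα hBα
      _ = #α.out := by rw [mul_eq_self hα, mk_out]
  choose φ hφ0 hφ1 _ using fun p : ι =>
    exists_continuous_zero_one_of_isClosed isClosed_closure isClosed_closure p.2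
  obtain ⟨e, he, he_inj⟩ := exists_continuous_injective_pi_of_mk_le hι
  refine ⟨e ∘ fun x p => φ p x, he.comp (continuous_pi fun p => (φ p).continuous),
    he_inj.comp fun x y hxy => ?_⟩
  by_contra hne
  obtain ⟨u, hxu, hu, v, hyv, hv, huv⟩ := exists_open_nhds_disjoint_closure hne
  obtain ⟨U, hUB, hxU, hUu⟩ := hB.exists_subset_of_mem_open hxu hu
  obtain ⟨V, hVB, hyV, hVv⟩ := hB.exists_subset_of_mem_open hyv hv
  have hUV : Disjoint (closure U) (closure V) := huv.mono (closure_mono hUu) (closure_mono hVv)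
  have h := congrFun hxy ⟨(⟨U, hUB⟩, ⟨V, hVB⟩), hUV⟩
  rw [hφ0 _ (subset_closure hxU), hφ1 _ (subset_closure hyV)] at h
  exact zero_ne_one h

lemma eq_univ_of_dense_of_isCompact_image {X Y : Type*} [TopologicalSpace X] [TopologicalSpace Y]
    [T2Space Y] {f : X → Y} (hf : Continuous f) (hinj : Injective f) {D : Set X} (hD : Dense D)
    (hK : IsCompact (f '' D)) : D = Set.univ :=
  eq_univ_of_forall fun x => hinj.mem_set_image.mp <| hK.isClosed.closure_subset <|
    image_closure_subset_closure_image hf ⟨x, hD.closure_eq ▸ mem_univ x, rfl⟩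

lemma continuous_induced_of_isCompact_range {X Y Z : Type*} [TopologicalSpace Y]
    [TopologicalSpace Z] [T2Space Y] {F : X → Z} {q : Z → Y} (hq : Continuous q)
    (hF : IsCompact (range F)) (hinj : Injective (q ∘ F)) :
    Continuous[induced (q ∘ F) inferInstance, _] F := by
  let := induced (q ∘ F) inferInstance
  have := isCompact_iff_compactSpace.mp hF
  have hemb : IsEmbedding fun z : range F => q z := by
    refine (hq.comp continuous_subtype_val).isClosedEmbedding ?_ |>.isEmbedding
    rintro ⟨_, a, rfl⟩ ⟨_, b, rfl⟩ h
    exact Subtype.ext (congrArg F (hinj h))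
  exact continuous_subtype_val.comp <|
    (hemb.isInducing.continuous_iff (f := rangeFactorization F)).mpr continuous_induced_dom

lemma IsAlphaPseudocompact.isCompact_image {α : Cardinal.{u}} {X : Type u} [TopologicalSpace X]
    {D : Set X} (hD : IsAlphaPseudocompact α D) {f : X → (α.out → ℝ)} (hf : Continuous f) :
    IsCompact (f '' D) := by
  rw [image_eq_range]
  exact hD _ (hf.comp continuous_subtype_val)

lemma IsAlphaPseudocompact.continuous_induced {α : Cardinal.{u}} (hα : ℵ₀ ≤ α) {X : Type u}
    [TopologicalSpace X] (hX : IsAlphaPseudocompact α X) {f : X → (α.out → ℝ)}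
    (hf : Continuous f) (hinj : Injective f) {g : X → ℝ} (hg : Continuous g) :
    Continuous[induced f inferInstance, _] g := by
  obtain ⟨e⟩ : Nonempty (Option α.out ≃ α.out) := by
    rw [← Cardinal.eq, mk_option, mk_out, add_one_eq hα]
  let F : X → (α.out → ℝ) := fun x i => (e.symm i).elim (g x) (f x)
  have hF : Continuous F := continuous_pi fun i => by
    simp only [F]
    cases e.symm i with
    | none => exact hg
    | some j => exact (continuous_apply j).comp hf
  let q : (α.out → ℝ) → (α.out → ℝ) := fun y j => y (e (some j))
  have hqF : q ∘ F = f := by ext x j; simp [q, F]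
  have hFc := continuous_induced_of_isCompact_range (q := q) (by fun_prop) (hX F hF) (hqF ▸ hinj)
  rw [hqF] at hFc
  have hgF : g = fun x => F x (e none) := by ext x; simp [F]
  rw [hgF]
  exact @Continuous.comp _ _ _ (induced f _) _ _ _ _ (continuous_apply (e none)) hFc

lemma IsAlphaPseudocompact.isInducing {α : Cardinal.{u}} (hα : ℵ₀ ≤ α) {X : Type u}
    [TopologicalSpace X] [CompletelyRegularSpace X] (hX : IsAlphaPseudocompact α X)
    {f : X → (α.out → ℝ)} (hf : Continuous f) (hinj : Injective f) : IsInducing f := by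
  refine ⟨le_antisymm (continuous_iff_le_induced.mp hf) fun U hU => ?_⟩
  refine (@isOpen_iff_forall_mem_open _ (induced f _) _).mpr fun x hx => ?_
  obtain ⟨g, hg, hgx, hgU⟩ := completelyRegularSpace_iff_isOpen.mp ‹_› x U hU hx
  have hle := continuous_iff_le_induced.mp <|
    hX.continuous_induced hα hf hinj (continuous_subtype_val.comp hg)
  refine ⟨(fun y => (g y : ℝ)) ⁻¹' Iio 1, fun y hy => ?_, hle _ (isOpen_induced isOpen_Iio), ?_⟩
  · by_contra hyU
    simp [hgU hyU] at hy
  · simp [hgx]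

lemma IsTopologicalGroup.completelyRegularSpace (G : Type*) [Group G] [TopologicalSpace G]
    [IsTopologicalGroup G] : CompletelyRegularSpace G :=
  .of_exists_uniformSpace ⟨IsTopologicalGroup.rightUniformSpace G, rfl⟩

theorem statement_6_general (α : Cardinal.{u}) (hα : ℵ₀ ≤ α) (G : Type u) [Group G]
    [t : TopologicalSpace G] [T2Space G] [CompactSpace G]
    (hw : tweight G ≤ α) :
    (¬ ∃ D : Subgroup G, D ≠ ⊤ ∧ Dense (D : Set G) ∧ IsAlphaPseudocompact α ↥D) ∧
    (¬ ∃ t' : TopologicalSpace G, t' < t ∧ @IsTopologicalGroup G t' _ ∧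
      @IsAlphaPseudocompact α G t') := by
  obtain ⟨f, hf, hinj⟩ := exists_continuous_injective_pi_of_tweight_le hα hw
  refine ⟨fun ⟨D, hD_ne, hD_dense, hD⟩ => hD_ne ?_, fun ⟨t', hlt, ht', hps⟩ => ?_⟩
  · exact Subgroup.coe_eq_univ.mp <|
      eq_univ_of_dense_of_isCompact_image hf hinj hD_dense (hD.isCompact_image hf)
  · let := t'
    have := IsTopologicalGroup.completelyRegularSpace G
    have ht'_eq : t' = induced f _ :=
      (hps.isInducing hα (continuous_le_dom hlt.le hf) hinj).eq_induced
    exact hlt.not_ge (ht'_eq ▸ continuous_iff_le_induced.mp hf)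

/-- a compact (not necessarily abelian) group of weight `≤ α` is both
`s_α`-extremal (no proper dense `α`-pseudocompact subgroup) and `r_α`-extremal
(no strictly finer `α`-pseudocompact group topology). -/
theorem statement_6 (α : Cardinal.{u}) (hα : ℵ₀ ≤ α) (G : Type u) [Group G]
    [t : TopologicalSpace G] [IsTopologicalGroup G] [T2Space G] [CompactSpace G]
    (hw : tweight G ≤ α) :
    (¬ ∃ D : Subgroup G, D ≠ ⊤ ∧ Dense (D : Set G) ∧ IsAlphaPseudocompact α ↥D) ∧
    (¬ ∃ t' : TopologicalSpace G, t' < t ∧ @IsTopologicalGroup G t' _ ∧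
      @IsAlphaPseudocompact α G t') :=
  statement_6_general α hα G (t := t) hw
end

section
/- Let α be an infinite cardinal and let G be an α-pseudocompact topological group. Then P_α G, the set G endowed with the topology generated by the G_α-sets of G, is a Baire space. -/
open Cardinal Set Function Topology Pointwise

universe u

/-!
A topological group is completely regular, so inside every nonempty `G_α`-set sits a nonempty
zero set of a continuous map `G → ℝ^α`, and zero sets are themselves `G_α`-sets. Hence the
nonempty zero sets form a π-base of `P_α G`. By `α`-pseudocompactness a decreasing sequence of
nonempty zero sets has nonempty intersection: the countably many maps combine into one map to
`ℝ^(ℕ × α) ≅ ℝ^α` with compact range. A space with a π-base that is complete in this sense is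
Baire, by the usual nested-sets argument.
-/

open TopologicalSpace

instance IsTopologicalGroup.completelyRegularSpace_s10 (G : Type*) [Group G] [TopologicalSpace G]
    [IsTopologicalGroup G] : CompletelyRegularSpace G :=
  let _ := IsTopologicalGroup.rightUniformSpace G
  inferInstance

theorem IsCompact.nonempty_iInter_preimage {X Y : Type*} [TopologicalSpace Y] {f : X → Y}
    (hf : IsCompact (range f)) {C : ℕ → Set Y} (hC : ∀ n, IsClosed (C n))
    (hanti : Antitone fun n => f ⁻¹' C n) (hne : ∀ n, (f ⁻¹' C n).Nonempty) :
    (⋂ n, f ⁻¹' C n).Nonempty := by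
  obtain ⟨_, ⟨x, rfl⟩, hx⟩ := hf.inter_iInter_nonempty C hC fun s => by
    obtain ⟨x, hx⟩ := hne (s.sup id)
    exact ⟨f x, mem_range_self x, mem_iInter₂.2 fun n hn => hanti (Finset.le_sup (f := id) hn) hx⟩
  exact ⟨x, mem_iInter.2 fun n => mem_iInter.1 hx n⟩

theorem BaireSpace.of_nonempty_iInter_of_piBase {X : Type*} [TopologicalSpace X]
    (𝒵 : Set (Set X)) (hopen : ∀ Z ∈ 𝒵, IsOpen Z)
    (hbase : ∀ U, IsOpen U → U.Nonempty → ∃ Z ∈ 𝒵, Z.Nonempty ∧ Z ⊆ U)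
    (hcomplete : ∀ Z : ℕ → Set X, (∀ n, Z n ∈ 𝒵) → Antitone Z → (∀ n, (Z n).Nonempty) →
      (⋂ n, Z n).Nonempty) :
    BaireSpace X := by
  refine ⟨fun D hDo hDd => dense_iff_inter_open.2 fun U hU hUne => ?_⟩
  obtain ⟨Z₀, hZ₀, hZ₀ne, hZ₀U⟩ := hbase U hU hUne
  have step (n : ℕ) (Z : {Z ∈ 𝒵 | Z.Nonempty}) :
      ∃ Z' : {Z ∈ 𝒵 | Z.Nonempty}, Z'.1 ⊆ Z.1 ∩ D n := by
    have hZo := hopen _ Z.2.1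
    obtain ⟨Z', hZ', hZ'ne, hZ'sub⟩ :=
      hbase _ (hZo.inter (hDo n)) ((hDd n).inter_open_nonempty _ hZo Z.2.2)
    exact ⟨⟨Z', hZ', hZ'ne⟩, hZ'sub⟩
  choose next hnext using step
  let Z : ℕ → {Z ∈ 𝒵 | Z.Nonempty} := fun n => Nat.rec ⟨Z₀, hZ₀, hZ₀ne⟩ next n
  have hZ (n : ℕ) : (Z (n + 1)).1 ⊆ (Z n).1 ∩ D n := hnext n (Z n)
  obtain ⟨x, hx⟩ := hcomplete (fun n => (Z n).1) (fun n => (Z n).2.1)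
    (antitone_nat_of_succ_le fun n => (hZ n).trans inter_subset_left) (fun n => (Z n).2.2)
  exact ⟨x, hZ₀U (mem_iInter.1 hx 0), mem_iInter.2 fun n => (hZ n (mem_iInter.1 hx (n + 1))).2⟩

section GAlphaSets

variable {X : Type u} [t : TopologicalSpace X] {α : Cardinal.{u}}

theorem isGAlphaSet_univ : IsGAlphaSet α (univ : Set X) :=
  ⟨∅, by simp, by simp, by simp⟩

theorem IsGAlphaSet.iInter (hα : ℵ₀ ≤ α) {ι : Type u} (hι : #ι ≤ α) {S : ι → Set X}
    (hS : ∀ i, IsGAlphaSet α (S i)) : IsGAlphaSet α (⋂ i, S i) := by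
  choose 𝒰 h𝒰 hcard hS𝒰 using hS
  refine ⟨⋃ i, 𝒰 i, fun U hU => ?_, ?_, by rw [sInter_iUnion]; exact iInter_congr hS𝒰⟩
  · obtain ⟨i, hi⟩ := mem_iUnion.1 hU
    exact h𝒰 i U hi
  · calc #(⋃ i, 𝒰 i) ≤ #ι * ⨆ i, #(𝒰 i) := mk_iUnion_le _
      _ ≤ α * α := mul_le_mul' hι (ciSup_le' hcard)
      _ = α := mul_eq_self hα

theorem IsGAlphaSet.inter (hα : ℵ₀ ≤ α) {S T : Set X} (hS : IsGAlphaSet α S)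
    (hT : IsGAlphaSet α T) : IsGAlphaSet α (S ∩ T) := by
  obtain ⟨𝒰, h𝒰, hc𝒰, rfl⟩ := hS
  obtain ⟨𝒱, h𝒱, hc𝒱, rfl⟩ := hT
  refine ⟨𝒰 ∪ 𝒱, fun W hW => hW.elim (h𝒰 W) (h𝒱 W), ?_, (sInter_union _ _).symm⟩
  exact (mk_union_le _ _).trans ((add_le_add hc𝒰 hc𝒱).trans (add_eq_self hα).le)

theorem IsGδ.isGAlphaSet (hα : ℵ₀ ≤ α) {S : Set X} (hS : IsGδ S) : IsGAlphaSet α S := by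
  obtain ⟨T, hT, hcount, rfl⟩ := hS
  exact ⟨T, hT, (le_aleph0_iff_set_countable.2 hcount).trans hα, rfl⟩

theorem exists_isGAlphaSet_subset_of_isOpen_pAlphaTop (hα : ℵ₀ ≤ α) {U : Set X}
    (hU : IsOpen[PAlphaTop α X t] U) {x : X} (hx : x ∈ U) :
    ∃ S, IsGAlphaSet α S ∧ x ∈ S ∧ S ⊆ U :=
  @IsTopologicalBasis.exists_subset_of_mem_open _ (PAlphaTop α X t) _
    (@isTopologicalBasis_of_subbasis_of_finiteInter _ (PAlphaTop α X t) _ rfl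
      ⟨isGAlphaSet_univ, fun _ hS _ hT => hS.inter hα hT⟩) _ _ hx hU

end GAlphaSets

def IsAlphaZeroSet (α : Cardinal.{u}) {X : Type u} [TopologicalSpace X] (Z : Set X) : Prop :=
  ∃ (ι : Type u) (f : X → ι → ℝ), #ι ≤ α ∧ Continuous f ∧ f ⁻¹' {0} = Z

section ZeroSets

variable {X : Type u} [TopologicalSpace X] {α : Cardinal.{u}}

theorem IsAlphaZeroSet.isGAlphaSet (hα : ℵ₀ ≤ α) {Z : Set X} (hZ : IsAlphaZeroSet α Z) :
    IsGAlphaSet α Z := by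
  obtain ⟨ι, f, hι, hf, rfl⟩ := hZ
  have hcoord : f ⁻¹' {0} = ⋂ i, (fun x => f x i) ⁻¹' {0} := by
    ext
    simp [funext_iff]
  rw [hcoord]
  exact .iInter hα hι fun i => (isClosed_singleton.isGδ.preimage ((continuous_apply i).comp hf)).isGAlphaSet hα

theorem IsGAlphaSet.exists_isAlphaZeroSet_subset [CompletelyRegularSpace X] {S : Set X}
    (hS : IsGAlphaSet α S) {x : X} (hx : x ∈ S) :
    ∃ Z, IsAlphaZeroSet α Z ∧ x ∈ Z ∧ Z ⊆ S := by
  obtain ⟨𝒰, h𝒰, hcard, rfl⟩ := hS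
  choose g hg hgx hg1 using fun U : 𝒰 =>
    completelyRegularSpace_iff_isOpen.1 ‹_› x U (h𝒰 U U.2) (hx U U.2)
  refine ⟨(fun y U => (g U y : ℝ)) ⁻¹' {0},
    ⟨𝒰, _, hcard, continuous_pi fun U => continuous_subtype_val.comp (hg U), rfl⟩, ?_, ?_⟩
  · simp [funext_iff, hgx]
  · intro y hy U hU
    by_contra hyU
    have h0 : (g ⟨U, hU⟩ y : ℝ) = 0 := congrFun hy ⟨U, hU⟩
    simp [hg1 ⟨U, hU⟩ hyU] at h0

theorem IsAlphaPseudocompact.isCompact_range (hX : IsAlphaPseudocompact α X) {ι : Type u}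
    (hι : #ι ≤ α) {f : X → ι → ℝ} (hf : Continuous f) : IsCompact (range f) := by
  rcases isEmpty_or_nonempty ι with _ | _
  · exact subsingleton_of_subsingleton.isCompact
  obtain ⟨e⟩ : Nonempty (ι ↪ α.out) := by rwa [← Cardinal.le_def, mk_out]
  -- `f` is recovered from a map into `ℝ^α` by precomposing with the surjection `invFun e`.
  have hrange : range f = (· ∘ e) '' range fun x => f x ∘ invFun e := by
    rw [← range_comp]
    ext
    simp [Function.comp_assoc, (leftInverse_invFun e.injective).comp_eq_id]
  rw [hrange]
  exact (hX _ (continuous_pi fun _ => (continuous_apply _).comp hf)).image (continuous_pi fun _ => continuous_apply _)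

theorem IsAlphaPseudocompact.nonempty_iInter (hα : ℵ₀ ≤ α) (hX : IsAlphaPseudocompact α X)
    {Z : ℕ → Set X} (hZ : ∀ n, IsAlphaZeroSet α (Z n)) (hanti : Antitone Z)
    (hne : ∀ n, (Z n).Nonempty) : (⋂ n, Z n).Nonempty := by
  choose ι f hι hf hfZ using hZ
  have hcard : #(Σ n, ι n) ≤ α :=
    calc #(Σ n, ι n) = Cardinal.sum fun n => #(ι n) := mk_sigma _
      _ ≤ Cardinal.sum fun _ : ℕ => α := sum_le_sum _ _ hι
      _ = α := by simp [aleph0_mul_eq hα]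
  let F : X → (Σ n, ι n) → ℝ := fun x p => f p.1 x p.2
  let C (n : ℕ) : Set ((Σ n, ι n) → ℝ) := ⋂ i, {v | v ⟨n, i⟩ = 0}
  have hFC (n : ℕ) : F ⁻¹' C n = Z n := by
    rw [← hfZ n]
    ext
    simp [F, C, funext_iff]
  have hC (n : ℕ) : IsClosed (C n) :=
    isClosed_iInter fun _ => isClosed_eq (continuous_apply _) continuous_const
  have hF : Continuous F := continuous_pi fun p => (continuous_apply p.2).comp (hf p.1)
  simpa only [hFC] using (hX.isCompact_range hcard hF).nonempty_iInter_preimage hC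
    (by simpa only [hFC] using hanti) (by simpa only [hFC] using hne)

end ZeroSets

theorem statement_10_general (α : Cardinal.{u}) (hα : ℵ₀ ≤ α) (G : Type u) [Group G]
    [t : TopologicalSpace G] [IsTopologicalGroup G]
    (hG : IsAlphaPseudocompact α G) :
    @BaireSpace G (PAlphaTop α G t) := by
  refine @BaireSpace.of_nonempty_iInter_of_piBase G (PAlphaTop α G t) {Z | IsAlphaZeroSet α Z}
    (fun Z hZ => isOpen_generateFrom_of_mem (hZ.isGAlphaSet hα)) ?_
    (fun Z hZ hanti hne => hG.nonempty_iInter hα hZ hanti hne)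
  intro U hU ⟨x, hx⟩
  obtain ⟨S, hS, hxS, hSU⟩ := exists_isGAlphaSet_subset_of_isOpen_pAlphaTop hα hU hx
  obtain ⟨Z, hZ, hxZ, hZS⟩ := hS.exists_isAlphaZeroSet_subset hxS
  exact ⟨Z, hZ, ⟨x, hxZ⟩, hZS.trans hSU⟩

/-- for an `α`-pseudocompact group `G`, the space `P_α G` (the set `G` with
the topology generated by the `G_α`-sets) is Baire. -/
theorem statement_10 (α : Cardinal.{u}) (hα : ℵ₀ ≤ α) (G : Type u) [Group G]
    [t : TopologicalSpace G] [IsTopologicalGroup G] [T2Space G]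
    (hG : IsAlphaPseudocompact α G) :
    @BaireSpace G (PAlphaTop α G t) :=
  statement_10_general α hα G (t := t) hG
end
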